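/- (Non-stabilizerness by trace distance of the T state) Let ρ_T = ½(I + (X + Y + Z)/√3) be the single-qubit T-state density matrix. Then the minimum of the trace distance T(ρ_T, σ) over all σ in the single-qubit stabilizer polytope (the convex hull of ρ(±e₁), ρ(±e₂), ρ(±e₃)) equals (√3 − 1)/(2√3) = (3 − √3)/6 ≈ 0.211. -/

import Mathlib

open ComplexOrder

noncomputable def traceNorm {n : Type*} [Fintype n] [DecidableEq n]
    (A : Matrix n n ℂ) : ℝ :=
  (((Matrix.posSemidef_conjTranspose_mul_self A).1.eigenvectorUnitary : Matrix n n ℂ) *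
    Matrix.diagonal (((↑) : ℝ → ℂ) ∘ (fun x : ℝ => Real.sqrt x) ∘
      (Matrix.posSemidef_conjTranspose_mul_self A).1.eigenvalues) *
    (star ((Matrix.posSemidef_conjTranspose_mul_self A).1.eigenvectorUnitary : Matrix n n ℂ))).trace.re


/-- Trace distance between matrices: half the trace norm of the difference. -/
noncomputable def traceDist {n : Type*} [Fintype n] [DecidableEq n]
    (ρ σ : Matrix n n ℂ) : ℝ :=
  traceNorm (ρ - σ) / 2

/-- A density matrix: positive semidefinite with trace one. -/
def IsDensityMatrix {n : Type*} [Fintype n] [DecidableEq n]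
    (ρ : Matrix n n ℂ) : Prop :=
  ρ.PosSemidef ∧ ρ.trace = 1

noncomputable def PauliX : Matrix (Fin 2) (Fin 2) ℂ := !![0, 1; 1, 0]
noncomputable def PauliY : Matrix (Fin 2) (Fin 2) ℂ := !![0, -Complex.I; Complex.I, 0]
noncomputable def PauliZ : Matrix (Fin 2) (Fin 2) ℂ := !![1, 0; 0, -1]

/-- The qubit density matrix with Bloch vector r. -/
noncomputable def blochMatrix (r : EuclideanSpace ℝ (Fin 3)) : Matrix (Fin 2) (Fin 2) ℂ :=
  (1/2 : ℂ) • ((1 : Matrix (Fin 2) (Fin 2) ℂ) + (r 0 : ℂ) • PauliX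
    + (r 1 : ℂ) • PauliY + (r 2 : ℂ) • PauliZ)

/-- The single-qubit stabilizer polytope: convex hull of the six eigenprojectors
of the Pauli matrices, i.e. of ρ(±e₁), ρ(±e₂), ρ(±e₃). -/
noncomputable def stabPolytope1 : Set (Matrix (Fin 2) (Fin 2) ℂ) :=
  convexHull ℝ (Set.range fun p : Fin 3 × Bool =>
    blochMatrix (EuclideanSpace.single p.1 (if p.2 then (1 : ℝ) else -1)))

/-- The T state: Bloch vector (1,1,1)/√3. -/
noncomputable def rhoT : Matrix (Fin 2) (Fin 2) ℂ :=
  blochMatrix (WithLp.toLp 2 (fun _ => 1 / Real.sqrt 3 : Fin 3 → ℝ) : EuclideanSpace ℝ (Fin 3))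

/- ========================= auxiliary lemmas ========================= -/

open Matrix in
lemma traceNorm_of_sq (A : Matrix (Fin 2) (Fin 2) ℂ) (c : ℝ) (hc : 0 ≤ c)
    (h : Aᴴ * A = (c : ℂ) • 1) : traceNorm A = 2 * Real.sqrt c := by
  have hpsd : Matrix.PosSemidef ((Real.sqrt c : ℂ) • (1 : Matrix (Fin 2) (Fin 2) ℂ)) := by
    have : ((Real.sqrt c : ℂ) • (1 : Matrix (Fin 2) (Fin 2) ℂ)) =
        Matrix.diagonal (fun _ => (Real.sqrt c : ℂ)) := by
      rw [Matrix.smul_eq_diagonal_mul, Matrix.mul_one]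
    rw [this]
    exact Matrix.posSemidef_diagonal_iff.mpr fun i => by positivity
  have hsq : ((Real.sqrt c : ℂ) • (1 : Matrix (Fin 2) (Fin 2) ℂ)) ^ 2 = Aᴴ * A := by
    rw [h, sq, Matrix.smul_mul, Matrix.mul_smul, smul_smul, Matrix.one_mul,
      ← Complex.ofReal_mul, Real.mul_self_sqrt hc]
  have hA := (Matrix.posSemidef_conjTranspose_mul_self A).1
  have key : traceNorm A = (cfc Real.sqrt (Aᴴ * A)).trace.re := by
    rw [traceNorm, Matrix.IsHermitian.cfc_eq hA, Matrix.IsHermitian.cfc,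
      Unitary.conjStarAlgAut_apply]
    rfl
  have hc' : Aᴴ * A = algebraMap ℝ (Matrix (Fin 2) (Fin 2) ℂ) c := by
    rw [h, Algebra.algebraMap_eq_smul_one, Complex.coe_smul]
  rw [key, hc', cfc_algebraMap, Algebra.algebraMap_eq_smul_one, Matrix.trace_smul,
    Matrix.trace_one]
  simp
  ring

noncomputable def devM (d : Fin 3 → ℝ) : Matrix (Fin 2) (Fin 2) ℂ :=
  (1/2 : ℂ) • ((d 0 : ℂ) • PauliX + (d 1 : ℂ) • PauliY + (d 2 : ℂ) • PauliZ)

lemma bloch_sub (r s : EuclideanSpace ℝ (Fin 3)) :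
    blochMatrix r - blochMatrix s = devM (fun i => r i - s i) := by
  simp only [blochMatrix, devM]
  ext i j
  fin_cases i <;> fin_cases j <;>
    simp [PauliX, PauliY, PauliZ, Matrix.one_apply, Complex.ofReal_sub] <;> ring_nf

open Matrix in
lemma devM_sq (d : Fin 3 → ℝ) :
    (devM d)ᴴ * (devM d) =
      (((d 0 ^ 2 + d 1 ^ 2 + d 2 ^ 2) / 4 : ℝ) : ℂ) • 1 := by
  ext i j
  fin_cases i <;> fin_cases j <;>
    simp [devM, PauliX, PauliY, PauliZ, Matrix.mul_apply, Fin.sum_univ_two,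
      Matrix.one_apply, Complex.ext_iff, ← Complex.ofReal_pow] <;> constructor <;> ring

lemma traceNorm_bloch (r s : EuclideanSpace ℝ (Fin 3)) :
    traceNorm (blochMatrix r - blochMatrix s) =
      Real.sqrt ((r 0 - s 0) ^ 2 + (r 1 - s 1) ^ 2 + (r 2 - s 2) ^ 2) := by
  rw [bloch_sub, traceNorm_of_sq _ _ (by positivity) (devM_sq _)]
  rw [show ((r 0 - s 0) ^ 2 + (r 1 - s 1) ^ 2 + (r 2 - s 2) ^ 2) / 4
      = ((r 0 - s 0) ^ 2 + (r 1 - s 1) ^ 2 + (r 2 - s 2) ^ 2) * (1/2)^2 by ring,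
    Real.sqrt_mul (by positivity), Real.sqrt_sq (by norm_num)]
  ring

noncomputable def pauliL : EuclideanSpace ℝ (Fin 3) →ₗ[ℝ] Matrix (Fin 2) (Fin 2) ℂ where
  toFun r := (r 0 : ℂ) • PauliX + (r 1 : ℂ) • PauliY + (r 2 : ℂ) • PauliZ
  map_add' r s := by
    ext i j
    simp [Matrix.add_apply, Complex.real_smul]
    ring
  map_smul' c r := by
    ext i j
    simp [Matrix.add_apply, Complex.real_smul]
    ring

lemma blochMatrix_eq (r : EuclideanSpace ℝ (Fin 3)) :
    blochMatrix r = (1/2 : ℂ) • (1 : Matrix (Fin 2) (Fin 2) ℂ) + (1/2 : ℂ) • pauliL r := by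
  simp only [blochMatrix, pauliL, LinearMap.coe_mk, AddHom.coe_mk, smul_add]
  abel

lemma sum_bloch {ι : Type*} (s : Finset ι) (w : ι → ℝ) (v : ι → EuclideanSpace ℝ (Fin 3))
    (hw : ∑ i ∈ s, w i = 1) :
    ∑ i ∈ s, w i • blochMatrix (v i) = blochMatrix (∑ i ∈ s, w i • v i) := by
  have : ∀ i ∈ s, w i • blochMatrix (v i)
      = w i • ((1/2 : ℂ) • (1 : Matrix (Fin 2) (Fin 2) ℂ)) + (1/2 : ℂ) • pauliL (w i • v i) := by
    intro i _
    rw [blochMatrix_eq, map_smul, smul_add]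
    congr 1
    rw [smul_comm]
  rw [Finset.sum_congr rfl this, Finset.sum_add_distrib, ← Finset.sum_smul, ← Finset.smul_sum,
    ← map_sum, hw, one_smul, blochMatrix_eq]

lemma euc_sum_apply {ι : Type*} (s : Finset ι) (w : ι → ℝ) (v : ι → EuclideanSpace ℝ (Fin 3))
    (j : Fin 3) : (∑ i ∈ s, w i • v i) j = ∑ i ∈ s, w i * v i j := by
  classical
  induction s using Finset.induction with
  | empty => rfl
  | insert a s h ih => rw [Finset.sum_insert h, Finset.sum_insert h, ← ih]; rfl

lemma sqrt3_lemmas : (Real.sqrt 3) ^ 2 = 3 ∧ 1 < Real.sqrt 3 := by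
  constructor
  · exact Real.sq_sqrt (by norm_num)
  · nlinarith [Real.sq_sqrt (show (0:ℝ) ≤ 3 by norm_num), Real.sqrt_nonneg 3]

lemma key_ineq (a b c : ℝ) (h : a + b + c ≤ 1) :
    (Real.sqrt 3 - 1) / (2 * Real.sqrt 3) ≤
      Real.sqrt ((1/Real.sqrt 3 - a)^2 + (1/Real.sqrt 3 - b)^2 + (1/Real.sqrt 3 - c)^2) / 2 := by
  obtain ⟨hu, hu1⟩ := sqrt3_lemmas
  set u := Real.sqrt 3 with hudef
  have hupos : 0 < u := by linarith
  have hinv : 1 / u = u / 3 := by field_simp; nlinarith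
  rw [hinv] at *
  have key : ((u - 1)/u)^2 ≤ (u/3 - a)^2 + (u/3 - b)^2 + (u/3 - c)^2 := by
    have h1 : ((u - 1)/u)^2 = (4 - 2*u)/3 := by
      rw [div_pow]
      rw [hu]
      field_simp
      nlinarith
    rw [h1]
    nlinarith [sq_nonneg (a - b), sq_nonneg (b - c), sq_nonneg (a - c),
      sq_nonneg (a + b + c - 1), mul_nonneg (by linarith : (0:ℝ) ≤ u - 1)
        (by linarith : (0:ℝ) ≤ 1 - (a + b + c))]
  have h2 : (u - 1)/u ≤ Real.sqrt ((u/3 - a)^2 + (u/3 - b)^2 + (u/3 - c)^2) := by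
    rw [show (u-1)/u = Real.sqrt (((u-1)/u)^2) by
      rw [Real.sqrt_sq (div_nonneg (by linarith) (by linarith))]]
    exact Real.sqrt_le_sqrt key
  rw [div_le_div_iff₀ (by linarith) (by norm_num)]
  calc (u - 1) * 2 = ((u-1)/u) * (2*u) := by field_simp
    _ ≤ Real.sqrt ((u/3 - a)^2 + (u/3 - b)^2 + (u/3 - c)^2) * (2*u) :=
        mul_le_mul_of_nonneg_right h2 (by linarith)

/-- Bloch vectors of the six stabilizer states. -/
noncomputable def stabVec (p : Fin 3 × Bool) : EuclideanSpace ℝ (Fin 3) :=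
  EuclideanSpace.single p.1 (if p.2 then (1 : ℝ) else -1)

lemma stabVec_coord_sum (p : Fin 3 × Bool) : stabVec p 0 + stabVec p 1 + stabVec p 2 ≤ 1 := by
  obtain ⟨k, b⟩ := p
  fin_cases k <;> cases b <;>
    simp [stabVec, EuclideanSpace.single_apply]

/-- The Bloch vector (1/3, 1/3, 1/3). -/
noncomputable def tVec : EuclideanSpace ℝ (Fin 3) := WithLp.toLp 2 ((fun _ => 1/3 : Fin 3 → ℝ) : _)

/-- The non-stabilizerness by trace distance of the T state: the minimum trace
distance from ρ_T to the single-qubit stabilizer polytope equals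
(√3 − 1)/(2√3) = (3 − √3)/6. -/
theorem ntd_T_state :
    IsLeast ((fun σ => traceDist rhoT σ) '' stabPolytope1)
      ((Real.sqrt 3 - 1) / (2 * Real.sqrt 3)) ∧
    (Real.sqrt 3 - 1) / (2 * Real.sqrt 3) = (3 - Real.sqrt 3) / 6 := by
  obtain ⟨hu, hu1⟩ := sqrt3_lemmas
  have hupos : (0:ℝ) < Real.sqrt 3 := by linarith
  refine ⟨⟨?_, ?_⟩, ?_⟩
  · -- membership: σ₀ = blochMatrix (1/3,1/3,1/3) achieves the value
    refine ⟨blochMatrix tVec, ?_, ?_⟩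
    · rw [stabPolytope1, convexHull_range_eq_exists_affineCombination]
      have hw3 : ∑ _i ∈ ({(0, true), (1, true), (2, true)} : Finset (Fin 3 × Bool)),
          (1/3 : ℝ) = 1 := by
        rw [Finset.sum_const, show ({((0:Fin 3), true), (1, true), (2, true)} :
          Finset (Fin 3 × Bool)).card = 3 from rfl]
        norm_num
      refine ⟨{(0, true), (1, true), (2, true)}, fun _ => 1/3, fun i _ => by norm_num, hw3, ?_⟩
      rw [Finset.affineCombination_eq_linear_combination _ _ _ hw3,
        sum_bloch _ _ _ hw3]
      refine congrArg blochMatrix ?_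
      ext j
      rw [euc_sum_apply]
      fin_cases j <;>
        simp [tVec, EuclideanSpace.single_apply]
    · show traceNorm (blochMatrix _ - blochMatrix tVec) / 2 = _
      rw [traceNorm_bloch]
      have ht : ∀ j : Fin 3, tVec j = 1/3 := fun _ => rfl
      rw [ht 0, ht 1, ht 2]
      have h13 : (1 / Real.sqrt 3 - 1/3) ^ 2 + (1 / Real.sqrt 3 - 1/3) ^ 2
          + (1 / Real.sqrt 3 - 1/3) ^ 2 = ((3 - Real.sqrt 3)/3) ^ 2 := by
        field_simp
        nlinarith
      rw [h13, Real.sqrt_sq (by nlinarith)]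
      rw [div_div, div_eq_div_iff (by norm_num) (by positivity)]
      nlinarith
  · -- lower bound
    rintro y ⟨σ, hσ, rfl⟩
    rw [stabPolytope1, convexHull_range_eq_exists_affineCombination] at hσ
    obtain ⟨fs, w, hw0, hw1, rfl⟩ := hσ
    rw [Finset.affineCombination_eq_linear_combination _ _ _ hw1]
    have hsb : ∑ i ∈ fs, w i • blochMatrix (stabVec i)
        = blochMatrix (∑ i ∈ fs, w i • stabVec i) := sum_bloch _ _ _ hw1
    simp only [stabVec] at hsb
    rw [hsb]
    set t := ∑ i ∈ fs, w i • stabVec i with htdef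
    have hsum : t 0 + t 1 + t 2 ≤ 1 := by
      rw [htdef, euc_sum_apply, euc_sum_apply, euc_sum_apply,
        ← Finset.sum_add_distrib, ← Finset.sum_add_distrib]
      calc ∑ i ∈ fs, (w i * stabVec i 0 + w i * stabVec i 1 + w i * stabVec i 2)
          = ∑ i ∈ fs, w i * (stabVec i 0 + stabVec i 1 + stabVec i 2) :=
            Finset.sum_congr rfl fun i _ => by ring
        _ ≤ ∑ i ∈ fs, w i * 1 := Finset.sum_le_sum fun i hi =>
            mul_le_mul_of_nonneg_left (stabVec_coord_sum i) (hw0 i hi)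
        _ = 1 := by simp [hw1]
    show _ ≤ traceNorm (blochMatrix _ - blochMatrix t) / 2
    rw [traceNorm_bloch]
    exact key_ineq (t 0) (t 1) (t 2) hsum
  · rw [div_eq_div_iff (by positivity) (by norm_num)]
    nlinarith
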